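/- arXiv:2604.15125 — 6 statements merged into one kernel-verified Lean document; each statement's English description precedes it below -/
import Mathlib

section
/- Let f : 2^[n] → ℝ be supermodular and p ∈ ℝⁿ a price vector. For any i ∈ [n], δ ≥ 0, and any S ∈ D_f(p), there exists T ∈ D_f(p + δ·e_i) with T ⊆ S. -/
/-!
Among the subsets of `S`, pick `T` maximising the surplus at the raised prices `q ≥ p`.
For any bundle `W`, supermodularity and the optimality of `S` at `p` give
`f W - f (W ∩ S) ≤ f (W ∪ S) - f S ≤ ∑_{W \ S} p ≤ ∑_{W \ S} q`,
so dropping the items outside `S` never lowers the surplus at `q`, and `T` is demanded.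
-/

open Finset

variable {α : Type*} [DecidableEq α]

def HasIncreasingMarginals (f : Finset α → ℝ) : Prop :=
  ∀ S T : Finset α, S ⊆ T → ∀ j ∉ T, f (insert j S) - f S ≤ f (insert j T) - f T

def IsDemand (f : Finset α → ℝ) (p : α → ℝ) (S : Finset α) : Prop :=
  ∀ W, f W - ∑ j ∈ W, p j ≤ f S - ∑ j ∈ S, p j

namespace HasIncreasingMarginals

variable {f : Finset α → ℝ}

theorem sub_le_sub_union (hf : HasIncreasingMarginals f) {A B : Finset α} (hAB : A ⊆ B)
    {C : Finset α} (hCB : Disjoint C B) : f (A ∪ C) - f A ≤ f (B ∪ C) - f B := by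
  induction C using Finset.induction_on with
  | empty => simp
  | @insert j C hjC ih =>
    obtain ⟨hjB, hCB⟩ := disjoint_insert_left.mp hCB
    have hstep := hf (A ∪ C) (B ∪ C) (union_subset_union_left hAB) j
      (by simp [hjB, hjC])
    rw [union_insert, union_insert]
    linarith [ih hCB]

theorem add_le_union_add_inter (hf : HasIncreasingMarginals f) (A B : Finset α) :
    f A + f B ≤ f (A ∪ B) + f (A ∩ B) := by
  have h := hf.sub_le_sub_union (inter_subset_right : A ∩ B ⊆ B)
    (sdiff_disjoint : Disjoint (A \ B) B)
  rw [union_comm (A ∩ B), sdiff_union_inter, union_sdiff_self_eq_union, union_comm B] at h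
  linarith

end HasIncreasingMarginals

theorem IsDemand.surplus_le_surplus_inter {f : Finset α → ℝ}
    (hf : ∀ A B, f A + f B ≤ f (A ∪ B) + f (A ∩ B)) {p q : α → ℝ} (hpq : p ≤ q)
    {S : Finset α} (hS : IsDemand f p S) (W : Finset α) :
    f W - ∑ j ∈ W, q j ≤ f (W ∩ S) - ∑ j ∈ W ∩ S, q j := by
  have hq_split := sum_inter_add_sum_sdiff W S q
  have hp_split : ∑ j ∈ W ∪ S, p j = ∑ j ∈ S, p j + ∑ j ∈ W \ S, p j := by
    rw [← sum_union sdiff_disjoint.symm, union_sdiff_self_eq_union, union_comm]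
  have hpq_sum : ∑ j ∈ W \ S, p j ≤ ∑ j ∈ W \ S, q j := sum_le_sum fun j _ => hpq j
  linarith [hf W S, hS (W ∪ S)]

theorem IsDemand.exists_subset_of_le {f : Finset α → ℝ}
    (hf : ∀ A B, f A + f B ≤ f (A ∪ B) + f (A ∩ B)) {p q : α → ℝ} (hpq : p ≤ q)
    {S : Finset α} (hS : IsDemand f p S) : ∃ T ⊆ S, IsDemand f q T := by
  obtain ⟨T, hTS, hT⟩ := S.powerset.exists_max_image (fun W => f W - ∑ j ∈ W, q j)
    ⟨∅, empty_mem_powerset S⟩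
  refine ⟨T, mem_powerset.mp hTS, fun W => ?_⟩
  exact (hS.surplus_le_surplus_inter hf hpq W).trans
    (hT _ (mem_powerset.mpr inter_subset_right))

/-- Supermodular functions are gross complements: raising one item's price shrinks
some demanded bundle. -/
theorem stmt5 (n : ℕ) (f : Finset (Fin n) → ℝ)
    (hf : ∀ S T : Finset (Fin n), S ⊆ T → ∀ j ∉ T,
      f (insert j S) - f S ≤ f (insert j T) - f T)
    (p : Fin n → ℝ) (i : Fin n) (δ : ℝ) (hδ : 0 ≤ δ)
    (S : Finset (Fin n)) (hS : ∀ W, f W - ∑ j ∈ W, p j ≤ f S - ∑ j ∈ S, p j) :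
    ∃ T ⊆ S, ∀ W, f W - ∑ j ∈ W, (p j + if j = i then δ else 0) ≤
      f T - ∑ j ∈ T, (p j + if j = i then δ else 0) := by
  have hsupermodular : ∀ A B, f A + f B ≤ f (A ∪ B) + f (A ∩ B) :=
    HasIncreasingMarginals.add_le_union_add_inter hf
  have hraise : p ≤ fun j => p j + if j = i then δ else 0 := fun j => by
    dsimp only
    split_ifs <;> linarith
  exact IsDemand.exists_subset_of_le hsupermodular hraise hS
end

section
/- Let f : 2^[3] → ℝ be defined by f(∅)=0, f(S)=0 for |S|=1, f(S)=1 for |S|=2, f({1,2,3})=1. Then f is ultra, but f is not supermodular, and for each pair i ≠ j in {1,2,3} there exists a price vector p ∈ ℝ³ such that D_f(p) = {∅, {i,j}} (so f is not GSC for any bipartition of {1,2,3}). -/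
/-!
A function of the cardinality alone is ultra with equality: the exchange keeps both cardinalities,
and a partner `y ∈ T \ S` exists because `#(S \ T) ≤ #(T \ S)`. It fails supermodularity since
the marginal value of a third item drops from `1` at `{0}` to `0` at `{0, 1}`. At prices `1/2`
on `{i, j}` and `2` elsewhere, every bundle has nonpositive utility, and only `∅` and `{i, j}`
reach `0`.
-/

open Finset

variable {α : Type*} [DecidableEq α]

theorem Finset.exists_mem_sdiff_card_exchange {S T : Finset α} (hST : #S ≤ #T) {x : α}
    (hx : x ∈ S \ T) :
    ∃ y ∈ T \ S, #(insert y (S.erase x)) = #S ∧ #(insert x (T.erase y)) = #T := by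
  have hTS : (T \ S).Nonempty := by
    rw [← card_pos]
    exact (card_pos.mpr ⟨x, hx⟩).trans_le (card_sdiff_le_card_sdiff_iff.mpr hST)
  obtain ⟨y, hy⟩ := hTS
  rw [mem_sdiff] at hx hy
  refine ⟨y, mem_sdiff.mpr hy, ?_, ?_⟩
  · rw [card_insert_of_notMem (fun h => hy.2 (mem_of_mem_erase h)), card_erase_add_one hx.1]
  · rw [card_insert_of_notMem (fun h => hx.2 (mem_of_mem_erase h)), card_erase_add_one hy.1]

theorem ultra_of_eq_comp_card {f : Finset α → ℝ} (g : ℕ → ℝ) (hf : ∀ S, f S = g #S)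
    (S T : Finset α) (hST : #S ≤ #T) (x : α) (hx : x ∈ S \ T) :
    ∃ y ∈ T \ S, f S + f T ≤ f (insert y (S.erase x)) + f (insert x (T.erase y)) := by
  obtain ⟨y, hy, hS, hT⟩ := exists_mem_sdiff_card_exchange hST hx
  exact ⟨y, hy, by rw [hf, hf, hf, hf, hS, hT]⟩

noncomputable def pairPrice (i j m : α) : ℝ := if m = i ∨ m = j then 1 / 2 else 2

theorem pairPrice_pos (i j m : α) : 0 < pairPrice i j m := by
  unfold pairPrice; split_ifs <;> norm_num

theorem sum_pairPrice_pair {i j : α} (hij : i ≠ j) : ∑ m ∈ {i, j}, pairPrice i j m = 1 := by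
  rw [sum_pair hij]; norm_num [pairPrice]

section PairThreshold

variable {f : Finset α → ℝ} (hf : ∀ S, f S = if 2 ≤ #S then 1 else 0) {i j : α}
include hf

theorem pairThreshold_utility_neg (hij : i ≠ j) {T : Finset α} (hT₀ : T.Nonempty)
    (hT : T ≠ {i, j}) :
    f T - ∑ m ∈ T, pairPrice i j m < 0 := by
  rw [hf]
  split_ifs with hcard
  · have hnsub : ¬ T ⊆ {i, j} := fun hsub =>
      hT (eq_of_subset_of_card_le hsub (by rwa [card_pair hij]))
    obtain ⟨k, hkT, hk⟩ := not_subset.mp hnsub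
    have hpk : pairPrice i j k = 2 := by
      simp only [mem_insert, mem_singleton] at hk
      simp [pairPrice, hk]
    have := single_le_sum (fun m _ => (pairPrice_pos i j m).le) hkT
    linarith
  · linarith [sum_pos (fun m _ => pairPrice_pos i j m) hT₀]

theorem pairThreshold_utility_eq_zero (hij : i ≠ j) {S : Finset α}
    (hS : S = ∅ ∨ S = {i, j}) :
    f S - ∑ m ∈ S, pairPrice i j m = 0 := by
  rcases hS with rfl | rfl
  · simp [hf]
  · rw [hf, card_pair hij, sum_pairPrice_pair hij]; norm_num

theorem pairThreshold_utility_nonpos (hij : i ≠ j) (T : Finset α) :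
    f T - ∑ m ∈ T, pairPrice i j m ≤ 0 := by
  by_cases hT : T = ∅ ∨ T = {i, j}
  · exact (pairThreshold_utility_eq_zero hf hij hT).le
  rw [not_or] at hT
  exact (pairThreshold_utility_neg hf hij (nonempty_iff_ne_empty.mpr hT.1) hT.2).le

theorem pairThreshold_demand_iff (hij : i ≠ j) (S : Finset α) :
    (∀ T, f T - ∑ m ∈ T, pairPrice i j m ≤ f S - ∑ m ∈ S, pairPrice i j m) ↔
      S = ∅ ∨ S = {i, j} := by
  refine ⟨fun hmax => ?_, fun hS T => ?_⟩
  · by_contra! hS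
    linarith [hmax ∅, pairThreshold_utility_eq_zero hf hij (S := ∅) (Or.inl rfl),
      pairThreshold_utility_neg hf hij hS.1 hS.2]
  · rw [pairThreshold_utility_eq_zero hf hij hS]
    exact pairThreshold_utility_nonpos hf hij T

end PairThreshold

/-- The symmetric threshold function on three items is ultra, not supermodular,
and realizes complementarities between every pair (hence is not GSC). -/
theorem stmt7 (f : Finset (Fin 3) → ℝ)
    (hf : ∀ S, f S = if 2 ≤ S.card then 1 else 0) :
    (∀ S T : Finset (Fin 3), S.card ≤ T.card → ∀ x ∈ S \ T, ∃ y ∈ T \ S,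
        f S + f T ≤ f (insert y (S.erase x)) + f (insert x (T.erase y))) ∧
    (¬ ∀ S T : Finset (Fin 3), S ⊆ T → ∀ j ∉ T,
        f (insert j S) - f S ≤ f (insert j T) - f T) ∧
    (∀ i j : Fin 3, i ≠ j → ∃ p : Fin 3 → ℝ,
      ∀ S : Finset (Fin 3),
        (∀ T, f T - ∑ m ∈ T, p m ≤ f S - ∑ m ∈ S, p m) ↔ (S = ∅ ∨ S = {i, j})) := by
  refine ⟨ultra_of_eq_comp_card (fun n => if 2 ≤ n then 1 else 0) hf, ?_, ?_⟩
  · intro hsuper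
    have := hsuper {0} {0, 1} (by decide) 2 (by decide)
    norm_num +decide [hf] at this
  · exact fun i j hij => ⟨pairPrice i j, pairThreshold_demand_iff hf hij⟩
end

section
/- Let f : 2^[n] → ℝ be defined by f(S) = |S|². For any nonempty S ⊆ [n], define prices p_i = |S| if i ∈ S (i.e. p_i = f(S)/|S| = |S|) and p_i = 2n² otherwise. Then D_f(p) = {∅, S}. -/
/-!
Write `a = |T ∩ S|` and `b = |T \ S|`, so the surplus of a bundle `T` is
`(a + b)² - a|S| - bM` with outside price `M = 2n²`.
If `b = 0` it is `a(a - |S|) ≤ 0`, vanishing exactly for `a = 0` or `a = |S|`, i.e. `T = ∅` or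
`T = S`. If `b ≥ 1` it is at most `n² - M < 0`. So the maximal surplus is `0`, attained exactly at
`∅` and `S`.
-/

open Finset

section Surplus

variable {ι : Type*} [DecidableEq ι]

lemma sum_ite_mem_const (T S : Finset ι) (c d : ℝ) :
    ∑ i ∈ T, (if i ∈ S then c else d) = #(T ∩ S) * c + #(T \ S) * d := by
  rw [sum_ite, filter_mem_eq_inter, filter_notMem_eq_sdiff, sum_const, sum_const,
    nsmul_eq_mul, nsmul_eq_mul]

noncomputable def quadSurplus (S : Finset ι) (M : ℝ) (T : Finset ι) : ℝ :=
  (#T : ℝ) ^ 2 - ∑ i ∈ T, (if i ∈ S then (#S : ℝ) else M)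

variable {S T : Finset ι} {M : ℝ}

lemma quadSurplus_of_subset (hT : T ⊆ S) : quadSurplus S M T = #T * ((#T : ℝ) - #S) := by
  rw [quadSurplus, sum_ite_mem_const, inter_eq_left.mpr hT, sdiff_eq_empty_iff_subset.mpr hT]
  simp only [card_empty, Nat.cast_zero]
  ring

lemma quadSurplus_neg_of_not_subset [Fintype ι] (hM : (Fintype.card ι : ℝ) ^ 2 < M)
    (hT : ¬T ⊆ S) :    quadSurplus S M T < 0 := by
  have hb : (1 : ℝ) ≤ #(T \ S) := by exact_mod_cast (sdiff_nonempty.mpr hT).card_pos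
  have hcard : ((#(T ∩ S) : ℝ) + #(T \ S)) ≤ Fintype.card ι := by
    exact_mod_cast (card_inter_add_card_sdiff T S).trans_le (card_le_univ T)
  have hsq : ((#(T ∩ S) : ℝ) + #(T \ S)) ^ 2 ≤ (Fintype.card ι : ℝ) ^ 2 :=
    pow_le_pow_left₀ (by positivity) hcard 2
  have hM0 : 0 ≤ M := (sq_nonneg _).trans hM.le
  have hprod : 0 ≤ (#(T ∩ S) : ℝ) * #S := by positivity
  rw [quadSurplus, sum_ite_mem_const, ← card_inter_add_card_sdiff T S]
  push_cast
  nlinarith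

lemma quadSurplus_nonpos [Fintype ι] (hM : (Fintype.card ι : ℝ) ^ 2 < M) (T : Finset ι) :
    quadSurplus S M T ≤ 0 := by
  by_cases hT : T ⊆ S
  · rw [quadSurplus_of_subset hT]
    exact mul_nonpos_of_nonneg_of_nonpos (by positivity)
      (sub_nonpos.mpr (by exact_mod_cast card_le_card hT))
  · exact (quadSurplus_neg_of_not_subset hM hT).le

lemma quadSurplus_eq_zero_iff [Fintype ι] (hM : (Fintype.card ι : ℝ) ^ 2 < M) :
    quadSurplus S M T = 0 ↔ T = ∅ ∨ T = S := by
  by_cases hT : T ⊆ S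
  · rw [quadSurplus_of_subset hT, mul_eq_zero, sub_eq_zero, Nat.cast_eq_zero, Nat.cast_inj,
      card_eq_zero]
    exact or_congr_right ⟨fun h => eq_of_subset_of_card_le hT h.ge, fun h => h ▸ rfl⟩
  · refine iff_of_false (quadSurplus_neg_of_not_subset hM hT).ne ?_
    rintro (rfl | rfl)
    exacts [hT (empty_subset S), hT subset_rfl]

end Surplus

/-- For f(S) = |S|², at the given prices the demand set is exactly {∅, S}. -/
theorem stmt10 (n : ℕ) (f : Finset (Fin n) → ℝ)
    (hf : ∀ T, f T = (T.card : ℝ) ^ 2)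
    (S : Finset (Fin n)) (hS : S.Nonempty)
    (p : Fin n → ℝ)
    (hp : ∀ i, p i = if i ∈ S then (S.card : ℝ) else 2 * (n : ℝ) ^ 2) :
    ∀ T : Finset (Fin n),
      (∀ W, f W - ∑ i ∈ W, p i ≤ f T - ∑ i ∈ T, p i) ↔ (T = ∅ ∨ T = S) := by
  have hM : (Fintype.card (Fin n) : ℝ) ^ 2 < 2 * (n : ℝ) ^ 2 := by
    have : (0 : ℝ) < n := by exact_mod_cast Fin.pos hS.choose
    rw [Fintype.card_fin]
    nlinarith
  have hsurplus : ∀ W, f W - ∑ i ∈ W, p i = quadSurplus S (2 * (n : ℝ) ^ 2) W := fun W => by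
    simp only [quadSurplus, hf, hp]
  intro T
  simp only [hsurplus, ← quadSurplus_eq_zero_iff hM]
  refine ⟨fun h => (quadSurplus_nonpos hM T).antisymm ?_, fun h W => h ▸ quadSurplus_nonpos hM W⟩
  simpa [quadSurplus] using h ∅
end

section
/- Let P, N ⊆ [n] be disjoint and nonempty, let U = P × N, and define the coverage function f(S) = |⋃_{i∈S} h(i)| / |U| where h(i) = {i} × N for i ∈ P, h(i) = P × {i} for i ∈ N, and h(i) = ∅ otherwise. Define prices p_i = f({i}) - 1/(2|N||U|) for i ∈ N, p_i = f({i}) - 1/(2|P||U|) for i ∈ P, and p_i = 2 otherwise. Then D_f(p) = {N, P}. -/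
/-!
Write `m = |P|`, `k = |N|`, `a = |S ∩ P|`, `b = |S ∩ N|` and `e = |S \ (P ∪ N)|`. By
inclusion–exclusion `S` covers `a k + b m - a b` pairs of `P × N`, and the prices turn the
utility `f S - p(S)` into `1 / (2 m k)` minus `σ / (2 (m k)²)`, where the slack
`σ = m k + 2 a b m k + 4 e (m k)² - (a k + b m)` is a natural number. It vanishes exactly when
`e = 0` and `(a, b)` is `(0, k)` or `(m, 0)`, that is, when `S` is `N` or `P`.
-/

open Finset

theorem utility_numerator_le {a b e m k : ℕ} (ha : a ≤ m) (hb : b ≤ k) :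
    a * k + b * m ≤ m * k + 2 * a * b * (m * k) + 4 * e * (m * k) ^ 2 := by
  have hak := Nat.mul_le_mul_right k ha
  have hbm := Nat.mul_le_mul_right m hb
  rcases Nat.eq_zero_or_pos a with rfl | ha1
  · nlinarith
  rcases Nat.eq_zero_or_pos b with rfl | hb1
  · nlinarith
  nlinarith [Nat.le_mul_of_pos_left (m * k) (Nat.mul_pos ha1 hb1)]

theorem utility_numerator_eq_iff {a b e m k : ℕ} (hm : 0 < m) (hk : 0 < k) (ha : a ≤ m)
    (hb : b ≤ k) :
    a * k + b * m = m * k + 2 * a * b * (m * k) + 4 * e * (m * k) ^ 2 ↔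
      e = 0 ∧ (a = 0 ∧ b = k ∨ a = m ∧ b = 0) := by
  refine ⟨fun h => ?_, ?_⟩
  · have hak := Nat.mul_le_mul_right k ha
    have hbm := Nat.mul_le_mul_right m hb
    have hmk : 0 < m * k := Nat.mul_pos hm hk
    rcases Nat.eq_zero_or_pos e with rfl | he
    · refine ⟨rfl, ?_⟩
      rcases Nat.eq_zero_or_pos a with rfl | ha1
      · simp only [zero_mul, zero_add, mul_zero, add_zero] at h
        exact Or.inl ⟨rfl, Nat.eq_of_mul_eq_mul_right hm (h.trans (mul_comm m k))⟩
      rcases Nat.eq_zero_or_pos b with rfl | hb1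
      · simp only [zero_mul, mul_zero, add_zero] at h
        exact Or.inr ⟨Nat.eq_of_mul_eq_mul_right hk h, rfl⟩
      nlinarith [Nat.le_mul_of_pos_left (m * k) (Nat.mul_pos ha1 hb1)]
    · nlinarith [Nat.zero_le (a * b * (m * k))]
  · rintro ⟨rfl, ⟨rfl, rfl⟩ | ⟨rfl, rfl⟩⟩ <;> ring

variable {α : Type*} [DecidableEq α] {P N : Finset α}

def edgeCover (P N : Finset α) (i : α) : Finset (α × α) :=
  if i ∈ P then {i} ×ˢ N else if i ∈ N then P ×ˢ {i} else ∅

theorem biUnion_edgeCover (hPN : Disjoint P N) (S : Finset α) :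
    S.biUnion (edgeCover P N) = (S ∩ P) ×ˢ N ∪ P ×ˢ (S ∩ N) := by
  ext ⟨u, v⟩
  simp only [edgeCover, mem_biUnion, mem_union, mem_product, mem_inter]
  constructor
  · rintro ⟨i, hi, hx⟩
    split_ifs at hx with hiP hiN <;> simp_all
  · rintro (⟨⟨hu, huP⟩, hv⟩ | ⟨hu, hvS, hvN⟩)
    · exact ⟨u, hu, by simp [huP, hv]⟩
    · exact ⟨v, hvS, by simp [disjoint_right.mp hPN hvN, hvN, hu]⟩

theorem card_biUnion_edgeCover_add (hPN : Disjoint P N) (S : Finset α) :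
    #(S.biUnion (edgeCover P N)) + #(S ∩ P) * #(S ∩ N) = #(S ∩ P) * #N + #P * #(S ∩ N) := by
  rw [biUnion_edgeCover hPN, ← card_product, ← card_product, ← card_product,
    ← card_union_add_card_inter ((S ∩ P) ×ˢ N) (P ×ˢ (S ∩ N)), product_inter_product,
    inter_eq_left.mpr inter_subset_right, inter_eq_right.mpr inter_subset_right]

theorem sum_ite_mem_ite_mem (hPN : Disjoint P N) (S : Finset α) (cN cP c : ℝ) :
    ∑ i ∈ S, (if i ∈ N then cN else if i ∈ P then cP else c) =
      #(S ∩ N) * cN + #(S ∩ P) * cP + #(S \ (P ∪ N)) * c := by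
  rw [sum_ite, sum_ite, filter_mem_eq_inter]
  have hP : {x ∈ {x ∈ S | x ∉ N} | x ∈ P} = S ∩ P := by
    ext x
    simp only [mem_filter, mem_inter]
    exact ⟨fun h => ⟨h.1.1, h.2⟩, fun h => ⟨⟨h.1, disjoint_left.mp hPN h.2⟩, h.2⟩⟩
  have hO : {x ∈ {x ∈ S | x ∉ N} | x ∉ P} = S \ (P ∪ N) := by
    ext x
    simp only [mem_filter, mem_sdiff, mem_union]
    tauto
  simp only [hP, hO, sum_const, nsmul_eq_mul, add_assoc]

theorem card_inter_eq_card_right_iff {s t : Finset α} : #(s ∩ t) = #t ↔ t ⊆ s :=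
  ⟨fun h => inter_eq_right.mp (eq_of_subset_of_card_le inter_subset_right h.ge),
    fun h => by rw [inter_eq_right.mpr h]⟩

theorem eq_left_iff_card (hPN : Disjoint P N) (S : Finset α) :
    S = P ↔ #(S \ (P ∪ N)) = 0 ∧ #(S ∩ P) = #P ∧ #(S ∩ N) = 0 := by
  rw [card_eq_zero, sdiff_eq_empty_iff_subset, card_eq_zero, ← disjoint_iff_inter_eq_empty,
    card_inter_eq_card_right_iff]
  refine ⟨?_, fun ⟨hS, hPS, hSN⟩ => ?_⟩
  · rintro rfl
    exact ⟨subset_union_left, subset_rfl, hPN⟩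
  · refine Subset.antisymm (fun x hx => ?_) hPS
    exact (mem_union.mp (hS hx)).resolve_right (disjoint_left.mp hSN hx)

variable (P N)

noncomputable def coverageValue (S : Finset α) : ℝ :=
  #(S.biUnion (edgeCover P N)) / #(P ×ˢ N)

noncomputable def coveragePrice (i : α) : ℝ :=
  if i ∈ N then coverageValue P N {i} - 1 / (2 * #N * #(P ×ˢ N))
  else if i ∈ P then coverageValue P N {i} - 1 / (2 * #P * #(P ×ˢ N)) else 2

noncomputable def utility (S : Finset α) : ℝ :=
  coverageValue P N S - ∑ i ∈ S, coveragePrice P N i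

variable {P N}

theorem coverageValue_eq (hPN : Disjoint P N) (S : Finset α) :
    coverageValue P N S =
      (#(S ∩ P) * #N + #P * #(S ∩ N) - #(S ∩ P) * #(S ∩ N) : ℝ) / (#P * #N) := by
  have hcard : (#(S.biUnion (edgeCover P N)) + #(S ∩ P) * #(S ∩ N) : ℝ) =
      #(S ∩ P) * #N + #P * #(S ∩ N) := by
    exact_mod_cast card_biUnion_edgeCover_add hPN S
  rw [coverageValue, card_product, Nat.cast_mul, ← hcard, add_sub_cancel_right]

theorem coveragePrice_eq (hPN : Disjoint P N) :
    coveragePrice P N = fun i => if i ∈ N then (#P : ℝ) / (#P * #N) - 1 / (2 * #N * (#P * #N))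
      else if i ∈ P then (#N : ℝ) / (#P * #N) - 1 / (2 * #P * (#P * #N)) else 2 := by
  funext i
  rw [coveragePrice, card_product, Nat.cast_mul]
  split_ifs with hiN hiP
  · simp [coverageValue_eq hPN, hiN, disjoint_right.mp hPN hiN]
  · simp [coverageValue_eq hPN, hiP, hiN]
  · rfl

theorem utility_eq (hPN : Disjoint P N) (hP : P.Nonempty) (hN : N.Nonempty) (S : Finset α) :
    utility P N S = 1 / (2 * (#P * #N)) -
      (((#P * #N + 2 * #(S ∩ P) * #(S ∩ N) * (#P * #N) +
          4 * #(S \ (P ∪ N)) * (#P * #N) ^ 2 : ℕ) -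
        (#(S ∩ P) * #N + #(S ∩ N) * #P : ℕ) : ℝ) / (2 * (#P * #N) ^ 2)) := by
  have hm : (#P : ℝ) ≠ 0 := by exact_mod_cast hP.card_pos.ne'
  have hk : (#N : ℝ) ≠ 0 := by exact_mod_cast hN.card_pos.ne'
  rw [utility, coverageValue_eq hPN, coveragePrice_eq hPN, sum_ite_mem_ite_mem hPN]
  push_cast
  field_simp
  ring

theorem utility_le (hPN : Disjoint P N) (hP : P.Nonempty) (hN : N.Nonempty) (S : Finset α) :
    utility P N S ≤ 1 / (2 * (#P * #N)) := by
  rw [utility_eq hPN hP hN, sub_le_self_iff]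
  have h := utility_numerator_le (e := #(S \ (P ∪ N)))
    (card_le_card (inter_subset_right (s₁ := S) (s₂ := P)))
    (card_le_card (inter_subset_right (s₁ := S) (s₂ := N)))
  exact div_nonneg (sub_nonneg.mpr (by exact_mod_cast h)) (by positivity)

theorem utility_eq_iff (hPN : Disjoint P N) (hP : P.Nonempty) (hN : N.Nonempty) (S : Finset α) :
    utility P N S = 1 / (2 * (#P * #N)) ↔ S = N ∨ S = P := by
  rw [utility_eq hPN hP hN, sub_eq_self, div_eq_zero_iff, or_iff_left (by positivity), sub_eq_zero,
    Nat.cast_inj, eq_comm, utility_numerator_eq_iff hP.card_pos hN.card_pos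
      (card_le_card inter_subset_right) (card_le_card inter_subset_right),
    eq_left_iff_card hPN, eq_left_iff_card hPN.symm, union_comm N P]
  tauto

theorem forall_le_iff_eq_of_le {β γ : Type*} [PartialOrder γ] {g : β → γ} {c : γ} {x : β}
    (hle : ∀ y, g y ≤ c) (hx : g x = c) (y : β) : (∀ z, g z ≤ g y) ↔ g y = c :=
  ⟨fun h => (hle y).antisymm (hx ▸ h x), fun h z => h ▸ hle z⟩

/-- For the coverage-function construction, the demand set at the given prices is {N, P}. -/
theorem stmt13 (n : ℕ) (P N : Finset (Fin n)) (hdisj : Disjoint P N)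
    (hP : P.Nonempty) (hN : N.Nonempty)
    (h : Fin n → Finset (Fin n × Fin n))
    (hh : ∀ i, h i = if i ∈ P then ({i} : Finset (Fin n)) ×ˢ N
      else if i ∈ N then P ×ˢ ({i} : Finset (Fin n)) else ∅)
    (f : Finset (Fin n) → ℝ)
    (hf : ∀ S, f S = ((S.biUnion h).card : ℝ) / ((P ×ˢ N).card : ℝ))
    (p : Fin n → ℝ)
    (hp : ∀ i, p i = if i ∈ N then f {i} - 1 / (2 * (N.card : ℝ) * ((P ×ˢ N).card : ℝ))
      else if i ∈ P then f {i} - 1 / (2 * (P.card : ℝ) * ((P ×ˢ N).card : ℝ)) else 2) :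
    ∀ S, (∀ T, f T - ∑ i ∈ T, p i ≤ f S - ∑ i ∈ S, p i) ↔ (S = N ∨ S = P) := by
  obtain rfl : h = edgeCover P N := funext hh
  obtain rfl : f = coverageValue P N := funext hf
  obtain rfl : p = coveragePrice P N := funext hp
  intro S
  exact (forall_le_iff_eq_of_le (g := utility P N) (utility_le hdisj hP hN)
    ((utility_eq_iff hdisj hP hN N).mpr (Or.inl rfl)) S).trans (utility_eq_iff hdisj hP hN S)
end

section
/- For f : 2^[3] → ℝ with f(∅)=0, f(S)=0 for |S|=1, f(S)=1 for |S|=2, f({1,2,3})=1, there is no price vector p ∈ ℝ³ with D_f(p) = {∅, {1,2,3}}. (If f(∅) = f({1,2,3}) - (p₁+p₂+p₃) strictly exceeds f(S) - p(S) for all other S, then p₁+p₂+p₃=1, and either some p_i ≤ 0 making {i} at least as good as ∅, or all p_i > 0 making some 2-element set strictly better than {1,2,3}.) -/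
/-- For the symmetric threshold function on 3 items, no price vector has demand set
exactly {∅, {1,2,3}}; hence the vector (1,1,1) is not a demand-change vector. -/
theorem stmt18 (f : Finset (Fin 3) → ℝ)
    (hf : ∀ S, f S = if 2 ≤ S.card then 1 else 0) :
    ¬ ∃ p : Fin 3 → ℝ, ∀ S : Finset (Fin 3),
      (∀ T, f T - ∑ i ∈ T, p i ≤ f S - ∑ i ∈ S, p i) ↔
        (S = ∅ ∨ S = Finset.univ) := by
  rintro ⟨p, h⟩
  have h0 : ∀ T, f T - ∑ i ∈ T, p i ≤ 0 := by
    have := (h ∅).mpr (Or.inl rfl)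
    simpa [hf ∅] using this
  have hu : (1 : ℝ) - (p 0 + p 1 + p 2) ≤ 0 := by
    have := h0 Finset.univ
    simpa [hf, Fin.sum_univ_three] using this
  have hl : (0 : ℝ) ≤ 1 - (p 0 + p 1 + p 2) := by
    have := (h Finset.univ).mpr (Or.inr rfl) ∅
    simpa [hf, Fin.sum_univ_three] using this
  have key : ∀ S : Finset (Fin 3), S ≠ ∅ → S ≠ Finset.univ →
      f S - ∑ i ∈ S, p i < 0 := by
    intro S hS1 hS2
    have hne : ¬ (∀ T, f T - ∑ i ∈ T, p i ≤ f S - ∑ i ∈ S, p i) := by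
      intro hh
      rcases (h S).mp hh with h' | h' <;> [exact hS1 h'; exact hS2 h']
    push_neg at hne
    obtain ⟨T, hT⟩ := hne
    exact lt_of_lt_of_le hT (h0 T)
  have k01 : f {0, 1} - ∑ i ∈ ({0, 1} : Finset (Fin 3)), p i < 0 :=
    key _ (by decide) (by decide)
  have k02 : f {0, 2} - ∑ i ∈ ({0, 2} : Finset (Fin 3)), p i < 0 :=
    key _ (by decide) (by decide)
  have k12 : f {1, 2} - ∑ i ∈ ({1, 2} : Finset (Fin 3)), p i < 0 :=
    key _ (by decide) (by decide)
  rw [hf] at k01 k02 k12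
  simp [Finset.sum_pair] at k01 k02 k12
  linarith
end

section
/- Let α₁ < α₂ < ⋯ < α_k be reals in (0,1), let c ∈ ℝ≥0ⁿ, and let S₀ = ∅, S₁, …, S_k ⊆ [n] be sets with strictly increasing costs c(S₀) < c(S₁) < ⋯ < c(S_k). Then there exist values f(S₀)=0 < f(S₁) < ⋯ < f(S_k) such that for each i ∈ [k], α_i = (c(S_i) - c(S_{i-1}))/(f(S_i) - f(S_{i-1})); moreover for the monotone extension g(S) = max{f(S_i) : S_i ⊆ S}, each S_i is a best response at every α strictly between α_i and α_{i+1} (setting α_{k+1}=1), i.e. S_i maximizes α·g(S) - c(S). -/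
/-!
Put `C m = c(S m)` and define the values by the prescribed slopes,
`v (m + 1) - v m = (C (m + 1) - C m) / α (m + 1)`. Moving from `S m` to `S (m + 1)` changes the
payoff `β * v - C` by `(C (m + 1) - C m) / α (m + 1) * (β - α (m + 1))`, which is nonnegative
while `α (m + 1) ≤ β` and nonpositive afterwards; since the `α` increase, the payoff along the
chain is unimodal with its peak at `S i` for `β ∈ (α i, α (i + 1))`. An arbitrary bundle `T` is
valued by some `S m ⊆ T`, costs at least `C m`, and so does no better than `S m`.
-/

open Finset

theorem isMaxOn_Iic_of_le_succ_of_succ_le {β : Type*} [Preorder β] {f : ℕ → β} {i k : ℕ}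
    (hup : ∀ m < i, f m ≤ f (m + 1)) (hdown : ∀ m, i ≤ m → m < k → f (m + 1) ≤ f m) :
    IsMaxOn f (Set.Iic k) i := by
  intro m hm
  rcases le_total m i with hmi | hmi
  · exact monotoneOn_of_le_add_one Set.ordConnected_Iic (fun a _ _ ha => hup a ha)
      hmi (le_refl i) hmi
  · exact antitoneOn_of_add_one_le Set.ordConnected_Icc (fun a _ ha ha' => hdown a ha.1 ha'.2)
      ⟨le_rfl, hmi.trans hm⟩ ⟨hmi, hm⟩ hmi

section MonotoneExtension

variable {ι : Type*}

noncomputable def monotoneExtension (k : ℕ) (S : ℕ → Finset ι) (v : ℕ → ℝ) (T : Finset ι) : ℝ :=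
  sSup {x | ∃ m ≤ k, S m ⊆ T ∧ v m = x}

variable {k : ℕ} {S : ℕ → Finset ι} {v : ℕ → ℝ}

theorem exists_monotoneExtension_eq (hS0 : S 0 = ∅) (T : Finset ι) :
    ∃ m ≤ k, S m ⊆ T ∧ monotoneExtension k S v T = v m := by
  have hfin : {x | ∃ m ≤ k, S m ⊆ T ∧ v m = x}.Finite :=
    ((Set.finite_Iic k).image v).subset fun _ ⟨m, hm, _, hx⟩ => ⟨m, hm, hx⟩
  have hne : {x | ∃ m ≤ k, S m ⊆ T ∧ v m = x}.Nonempty :=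
    ⟨v 0, 0, Nat.zero_le k, hS0 ▸ Finset.empty_subset T, rfl⟩
  obtain ⟨m, hm, hsub, hvm⟩ := hne.csSup_mem hfin
  exact ⟨m, hm, hsub, hvm.symm⟩

theorem monotoneExtension_self {i : ℕ} (hi : i ≤ k) (hv : MonotoneOn v (Set.Iic k))
    (hS : ∀ m ≤ k, S m ⊆ S i → m ≤ i) :
    monotoneExtension k S v (S i) = v i := by
  refine IsGreatest.csSup_eq ⟨⟨i, hi, subset_rfl, rfl⟩, ?_⟩
  rintro _ ⟨m, hm, hsub, rfl⟩
  exact hv hm hi (hS m hm hsub)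

end MonotoneExtension

section ChainValues

variable (C α : ℕ → ℝ)

noncomputable def chainValues (i : ℕ) : ℝ :=
  ∑ m ∈ range i, (C (m + 1) - C m) / α (m + 1)

@[simp]
theorem chainValues_zero : chainValues C α 0 = 0 := by
  simp [chainValues]

theorem chainValues_succ_sub (i : ℕ) :
    chainValues C α (i + 1) - chainValues C α i = (C (i + 1) - C i) / α (i + 1) := by
  simp [chainValues, sum_range_succ]

theorem chainValues_payoff_succ_sub (β : ℝ) {m : ℕ} (hα : α (m + 1) ≠ 0) :
    (β * chainValues C α (m + 1) - C (m + 1)) - (β * chainValues C α m - C m) =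
      (C (m + 1) - C m) / α (m + 1) * (β - α (m + 1)) := by
  have h := chainValues_succ_sub C α m
  field_simp at h ⊢
  linear_combination β * h

variable {C α}

theorem isMaxOn_chainValues_payoff {β : ℝ} {i k : ℕ} (hα : ∀ m < k, 0 < α (m + 1))
    (hC : ∀ m < k, C m ≤ C (m + 1)) (hup : ∀ m < i, α (m + 1) ≤ β)
    (hdown : ∀ m, i ≤ m → m < k → β ≤ α (m + 1)) (hik : i ≤ k) :
    IsMaxOn (fun m => β * chainValues C α m - C m) (Set.Iic k) i := by
  refine isMaxOn_Iic_of_le_succ_of_succ_le (fun m hm => ?_) (fun m hm hmk => ?_)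
  · have hmk : m < k := hm.trans_le hik
    rw [← sub_nonneg, chainValues_payoff_succ_sub C α β (hα m hmk).ne']
    exact mul_nonneg (div_nonneg (sub_nonneg.2 (hC m hmk)) (hα m hmk).le) (sub_nonneg.2 (hup m hm))
  · rw [← sub_nonpos, chainValues_payoff_succ_sub C α β (hα m hmk).ne']
    exact mul_nonpos_of_nonneg_of_nonpos (div_nonneg (sub_nonneg.2 (hC m hmk)) (hα m hmk).le)
      (sub_nonpos.2 (hdown m hm hmk))

end ChainValues

theorem stmt19_general (n k : ℕ)
    (α : ℕ → ℝ)
    (hαpos : ∀ i, 1 ≤ i → i ≤ k → 0 < α i ∧ α i < 1)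
    (hαmono : ∀ i j, 1 ≤ i → i < j → j ≤ k → α i < α j)
    (c : Fin n → ℝ) (hc : ∀ i, 0 ≤ c i)
    (S : ℕ → Finset (Fin n)) (hS0 : S 0 = ∅)
    (hcost : ∀ i < k, ∑ j ∈ S i, c j < ∑ j ∈ S (i + 1), c j) :
    ∃ v : ℕ → ℝ, v 0 = 0 ∧ (∀ i < k, v i < v (i + 1)) ∧
      (∀ i, 1 ≤ i → i ≤ k →
        α i = ((∑ j ∈ S i, c j) - (∑ j ∈ S (i - 1), c j)) / (v i - v (i - 1))) ∧
      (∀ i ≤ k, ∀ β : ℝ, α i < β → β < α (i + 1) →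
        ∀ T : Finset (Fin n),
          β * sSup {x : ℝ | ∃ m ≤ k, S m ⊆ T ∧ v m = x} - ∑ j ∈ T, c j ≤
          β * sSup {x : ℝ | ∃ m ≤ k, S m ⊆ S i ∧ v m = x} - ∑ j ∈ S i, c j) := by
  set C : ℕ → ℝ := fun m => ∑ j ∈ S m, c j
  have hαpos' : ∀ m < k, 0 < α (m + 1) := fun m hm => (hαpos (m + 1) m.succ_pos hm).1
  have hαle : ∀ a b, 1 ≤ a → a ≤ b → b ≤ k → α a ≤ α b := fun a b ha hab hb =>
    hab.eq_or_lt.elim (fun h => h ▸ le_rfl) fun h => (hαmono a b ha h hb).le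
  have hcost_le : ∀ {T U}, T ⊆ U → ∑ j ∈ T, c j ≤ ∑ j ∈ U, c j := fun h =>
    sum_le_sum_of_subset_of_nonneg h fun j _ _ => hc j
  have hv : ∀ i < k, chainValues C α i < chainValues C α (i + 1) := fun i hi => by
    rw [← sub_pos, chainValues_succ_sub]
    exact div_pos (sub_pos.2 (hcost i hi)) (hαpos' i hi)
  have hCmono : StrictMonoOn C (Set.Iic k) :=
    strictMonoOn_of_lt_add_one Set.ordConnected_Iic fun m _ _ hm => hcost m hm
  refine ⟨chainValues C α, chainValues_zero C α, hv, fun i hi hik => ?_,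
    fun i hik β hβl hβr T => ?_⟩
  · obtain ⟨m, rfl⟩ := Nat.exists_eq_add_of_le' hi
    rw [Nat.add_sub_cancel, chainValues_succ_sub, div_div_cancel₀ (sub_pos.2 (hcost m hik)).ne']
  · obtain ⟨m, hmk, hmT, hgT⟩ := exists_monotoneExtension_eq (v := chainValues C α) hS0 T
    have hgSi : monotoneExtension k S (chainValues C α) (S i) = chainValues C α i :=
      monotoneExtension_self hik
        (monotoneOn_of_le_add_one Set.ordConnected_Iic fun m _ _ hm => (hv m hm).le)
        fun m hm hsub => (hCmono.le_iff_le hm hik).1 (hcost_le hsub)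
    have hpeak : β * chainValues C α m - C m ≤ β * chainValues C α i - C i :=
      isMaxOn_chainValues_payoff (β := β) hαpos' (fun m hm => (hcost m hm).le)
        (fun m hm => (hαle _ i m.succ_pos hm hik).trans hβl.le)
        (fun m hm hmk => hβr.le.trans (hαle _ _ i.succ_pos (by omega) hmk)) hik hmk
    change β * monotoneExtension k S (chainValues C α) T - _ ≤
      β * monotoneExtension k S (chainValues C α) (S i) - _
    rw [hgT, hgSi]
    linarith [hcost_le hmT, hpeak]

/-- Realizing an arbitrary cost-increasing chain of bundles as successive best responses:
there exist values v (= f(Sᵢ)) with v 0 = 0, strictly increasing, hitting the prescribed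
critical values αᵢ, such that under the monotone extension g each Sᵢ is a best response
on the interval (αᵢ, αᵢ₊₁). -/
theorem stmt19 (n k : ℕ) (hk : 1 ≤ k)
    (α : ℕ → ℝ) (hα0 : α 0 = 0) (hαtop : α (k + 1) = 1)
    (hαpos : ∀ i, 1 ≤ i → i ≤ k → 0 < α i ∧ α i < 1)
    (hαmono : ∀ i j, 1 ≤ i → i < j → j ≤ k → α i < α j)
    (c : Fin n → ℝ) (hc : ∀ i, 0 ≤ c i)
    (S : ℕ → Finset (Fin n)) (hS0 : S 0 = ∅)
    (hcost : ∀ i < k, ∑ j ∈ S i, c j < ∑ j ∈ S (i + 1), c j) :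
    ∃ v : ℕ → ℝ, v 0 = 0 ∧ (∀ i < k, v i < v (i + 1)) ∧
      (∀ i, 1 ≤ i → i ≤ k →
        α i = ((∑ j ∈ S i, c j) - (∑ j ∈ S (i - 1), c j)) / (v i - v (i - 1))) ∧
      (∀ i ≤ k, ∀ β : ℝ, α i < β → β < α (i + 1) →
        ∀ T : Finset (Fin n),
          β * sSup {x : ℝ | ∃ m ≤ k, S m ⊆ T ∧ v m = x} - ∑ j ∈ T, c j ≤
          β * sSup {x : ℝ | ∃ m ≤ k, S m ⊆ S i ∧ v m = x} - ∑ j ∈ S i, c j) :=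
  stmt19_general n k α hαpos hαmono c hc S hS0 hcost
end
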